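/- Let 𝒫 be a nonempty set of probability measures, 𝔼[X] := sup_{P∈𝒫} E_P[X] for integrable measurable X, and suppose (Xₙ) is a sequence of measurable functions with 𝔼[|Xₙ − X|^p] → 0 for some p > 0. Then there is a subsequence (X_{n_k}) converging to X quasi-surely, i.e., outside a set A with sup_{P∈𝒫} P(A) = 0. -/

import Mathlib

/-! Choose `n_k` with `𝔼[|X_{n_k} - X|^p] ≤ 2^{-k(p+1)}`. Chebyshev's inequality for the capacity
`c(A) = sup_{P ∈ 𝒫} P(A)` then gives `c(|X_{n_k} - X| ≥ 2^{-k}) ≤ 2^{-k}`, a summable bound, so by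
Borel–Cantelli, applied to each `P ∈ 𝒫`, the set where `|X_{n_k} - X| ≥ 2^{-k}` infinitely often is `𝒫`-polar; off it, `X_{n_k} → X`. -/

open MeasureTheory Filter
open scoped ENNReal Topology

section

variable {Ω : Type*} [MeasurableSpace Ω]

theorem meas_ge_le_lintegral_rpow_div {μ : Measure Ω} {f : Ω → ℝ≥0∞} (hf : AEMeasurable f μ)
    {p : ℝ} (hp : 0 < p) {ε : ℝ≥0∞} (hε₀ : ε ≠ 0) (hε : ε ≠ ∞) :
    μ {ω | ε ≤ f ω} ≤ (∫⁻ ω, f ω ^ p ∂μ) / ε ^ p := by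
  have hset : {ω | ε ≤ f ω} = {ω | ε ^ p ≤ f ω ^ p} := by
    ext ω
    exact (ENNReal.rpow_le_rpow_iff hp).symm
  rw [hset]
  exact meas_ge_le_lintegral_div (hf.pow_const p) (ENNReal.rpow_pos_of_nonneg
    (pos_iff_ne_zero.2 hε₀) hp.le).ne' (ENNReal.rpow_ne_top_of_nonneg hp.le hε)

theorem iSup_meas_ge_le_iSup_lintegral_rpow_div (S : Set (Measure Ω)) {f : Ω → ℝ≥0∞}
    (hf : Measurable f) {p : ℝ} (hp : 0 < p) {ε : ℝ≥0∞} (hε₀ : ε ≠ 0) (hε : ε ≠ ∞) :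
    ⨆ P ∈ S, P {ω | ε ≤ f ω} ≤ (⨆ P ∈ S, ∫⁻ ω, f ω ^ p ∂P) / ε ^ p :=
  iSup₂_le fun P hP => (meas_ge_le_lintegral_rpow_div hf.aemeasurable hp hε₀ hε).trans <|
    ENNReal.div_le_div_right (le_iSup₂ (f := fun P (_ : P ∈ S) => ∫⁻ ω, f ω ^ p ∂P) P hP) _

theorem iSup_measure_limsup_atTop_eq_zero (S : Set (Measure Ω)) {s : ℕ → Set Ω}
    (hs : ∑' k, ⨆ P ∈ S, P (s k) ≠ ∞) : ⨆ P ∈ S, P (limsup s atTop) = 0 := by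
  refine le_antisymm (iSup₂_le fun P hP => ?_) zero_le
  refine (measure_limsup_atTop_eq_zero (ne_top_of_le_ne_top hs ?_)).le
  exact ENNReal.tsum_le_tsum fun k => le_iSup₂ (f := fun P (_ : P ∈ S) => P (s k)) P hP

end

theorem tendsto_of_eventually_edist_lt {α : Type*} [PseudoEMetricSpace α] {u : ℕ → α} {a : α}
    {ε : ℕ → ℝ≥0∞} (hε : Tendsto ε atTop (𝓝 0)) (hu : ∀ᶠ k in atTop, edist (u k) a < ε k) :
    Tendsto u atTop (𝓝 a) :=
  tendsto_iff_edist_tendsto_0.2 <| tendsto_of_tendsto_of_tendsto_of_le_of_le' tendsto_const_nhds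
    hε (Eventually.of_forall fun _ => zero_le) (hu.mono fun _ => le_of_lt)

theorem qs_convergent_subsequence_of_Lp_convergence_general
    {Ω : Type*} [MeasurableSpace Ω]
    (S : Set (Measure Ω))
    (X : Ω → ℝ) (hX : Measurable X)
    (Xn : ℕ → Ω → ℝ) (hXn : ∀ n, Measurable (Xn n))
    (p : ℝ) (hp : 0 < p)
    (hconv : Tendsto
      (fun n => ⨆ P ∈ S, ∫⁻ ω, ENNReal.ofReal |Xn n ω - X ω| ^ p ∂P)
      atTop (nhds 0)) :
    ∃ φ : ℕ → ℕ, StrictMono φ ∧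
      ∃ A : Set Ω, MeasurableSet A ∧ (⨆ P ∈ S, P A) = 0 ∧
        ∀ ω ∉ A, Tendsto (fun k => Xn (φ k) ω) atTop (nhds (X ω)) := by
  simp only [← Real.dist_eq, ← edist_dist] at hconv
  set ε : ℕ → ℝ≥0∞ := fun k => 2⁻¹ ^ k
  have hε₀ (k : ℕ) : ε k ≠ 0 := by simp [ε]
  have hε (k : ℕ) : ε k ≠ ∞ := by simp [ε]
  have hεp (k : ℕ) : 0 < ε k ^ p * ε k :=
    ENNReal.mul_pos (ENNReal.rpow_pos (pos_iff_ne_zero.2 (hε₀ k)) (hε k)).ne' (hε₀ k)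
  obtain ⟨φ, hφ, hφε⟩ : ∃ φ : ℕ → ℕ, StrictMono φ ∧ ∀ k,
      ⨆ P ∈ S, ∫⁻ ω, edist (Xn (φ k) ω) (X ω) ^ p ∂P ≤ ε k ^ p * ε k :=
    extraction_forall_of_eventually fun k => (hconv.eventually_lt_const (hεp k)).mono
      fun _ => le_of_lt
  set B : ℕ → Set Ω := fun k => {ω | ε k ≤ edist (Xn (φ k) ω) (X ω)}
  have hB (k : ℕ) : ⨆ P ∈ S, P (B k) ≤ ε k :=
    (iSup_meas_ge_le_iSup_lintegral_rpow_div S ((hXn (φ k)).edist hX) hp (hε₀ k) (hε k)).trans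
      (ENNReal.div_le_of_le_mul' (hφε k))
  have hsum : ∑' k, ⨆ P ∈ S, P (B k) ≠ ∞ :=
    ne_top_of_le_ne_top (by simp [ε, ENNReal.tsum_geometric]) (ENNReal.tsum_le_tsum hB)
  refine ⟨φ, hφ, limsup B atTop,
    MeasurableSet.measurableSet_limsup fun k => measurableSet_le measurable_const
      ((hXn (φ k)).edist hX), iSup_measure_limsup_atTop_eq_zero S hsum, fun ω hω => ?_⟩
  rw [mem_limsup_iff_frequently_mem, not_frequently] at hω
  exact tendsto_of_eventually_edist_lt (ε := ε) (ENNReal.tendsto_pow_atTop_nhds_zero_of_lt_one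
    (by norm_num)) (hω.mono fun _ hk => not_le.1 hk)

theorem qs_convergent_subsequence_of_Lp_convergence
    {Ω : Type*} [MeasurableSpace Ω]
    (S : Set (Measure Ω)) (hne : S.Nonempty)
    (hprob : ∀ P ∈ S, IsProbabilityMeasure P)
    (X : Ω → ℝ) (hX : Measurable X)
    (Xn : ℕ → Ω → ℝ) (hXn : ∀ n, Measurable (Xn n))
    (p : ℝ) (hp : 0 < p)
    (hconv : Tendsto
      (fun n => ⨆ P ∈ S, ∫⁻ ω, ENNReal.ofReal |Xn n ω - X ω| ^ p ∂P)
      atTop (nhds 0)) :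
    ∃ φ : ℕ → ℕ, StrictMono φ ∧
      ∃ A : Set Ω, MeasurableSet A ∧ (⨆ P ∈ S, P A) = 0 ∧
        ∀ ω ∉ A, Tendsto (fun k => Xn (φ k) ω) atTop (nhds (X ω)) :=
  qs_convergent_subsequence_of_Lp_convergence_general S X hX Xn hXn p hp hconv
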